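/- The generalized quantum theta function Θ_{D,c} = Σ_{h∈D} exp(−(π/2)H_c(h̲,h̲)) e_D(h) satisfies, for every g ∈ D, the functional equation exp(−(π/2)H_c(g̲,g̲)) · e_D(g) · x_{g,c}*(Θ_{D,c}) = Θ_{D,c}, where x_{g,c}*(e_D(h)) = exp(−π X(g̲,h̲)) e_D(h) with X(g̲,h̲) = g̲ᵗ(Im T)^{-1}h̲* + 2(Im c)ᵗ(Im T)^{-1}(Im c). -/
import Mathlib


open Real Complex Matrix

noncomputable section

def cvec {n : ℕ} (v : Fin n → ℝ) : Fin n → ℂ := fun i => (v i : ℂ)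

def uVec {n : ℕ} (T : Matrix (Fin n) (Fin n) ℂ) (h : (Fin n → ℝ) × (Fin n → ℝ)) :
    Fin n → ℂ :=
  T.mulVec (cvec h.1) + cvec h.2

def uVecStar {n : ℕ} (T : Matrix (Fin n) (Fin n) ℂ) (h : (Fin n → ℝ) × (Fin n → ℝ)) :
    Fin n → ℂ :=
  (T.map (starRingEnd ℂ)).mulVec (cvec h.1) + cvec h.2

/-- `H(g̲,h̲) = g̲ᵗ (Im T)⁻¹ h̲*`. -/
def Hform {n : ℕ} (T : Matrix (Fin n) (Fin n) ℂ)
    (g h : (Fin n → ℝ) × (Fin n → ℝ)) : ℂ :=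
  dotProduct (uVec T g) ((((T.map Complex.im)⁻¹).map (fun r => (r : ℂ))).mulVec (uVecStar T h))

/-- `H_c(h̲,h̲) = (h̲ − 2i Im c)ᵗ(Im T)⁻¹(h̲* − 2i Im c) + 4i h₁ᵗ(Re c)`. -/
def HcForm {n : ℕ} (T : Matrix (Fin n) (Fin n) ℂ) (c : Fin n → ℂ)
    (h : (Fin n → ℝ) × (Fin n → ℝ)) : ℂ :=
  dotProduct (uVec T h - fun i => 2 * Complex.I * ((c i).im : ℂ))
      ((((T.map Complex.im)⁻¹).map (fun r => (r : ℂ))).mulVec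
        (uVecStar T h - fun i => 2 * Complex.I * ((c i).im : ℂ))) +
    4 * Complex.I * dotProduct (cvec h.1) (fun i => ((c i).re : ℂ))

/-- `X(g̲,h̲) = g̲ᵗ(Im T)⁻¹h̲* + 2(Im c)ᵗ(Im T)⁻¹(Im c)`. -/
def Xform {n : ℕ} (T : Matrix (Fin n) (Fin n) ℂ) (c : Fin n → ℂ)
    (g h : (Fin n → ℝ) × (Fin n → ℝ)) : ℂ :=
  Hform T g h +
    2 * dotProduct (fun i => ((c i).im : ℂ))
      ((((T.map Complex.im)⁻¹).map (fun r => (r : ℂ))).mulVec (fun i => ((c i).im : ℂ)))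

section aux

variable {n : ℕ} (T : Matrix (Fin n) (Fin n) ℂ)

def Mmat : Matrix (Fin n) (Fin n) ℂ := ((T.map Complex.im)⁻¹).map (fun r => (r : ℂ))

lemma Mmat_def : Mmat T = ((T.map Complex.im)⁻¹).map (fun r => (r : ℂ)) := rfl

lemma Mmat_symm (hsymm : T.IsSymm) : (Mmat T)ᵀ = Mmat T := by
  rw [Mmat_def, ← Matrix.transpose_map, Matrix.transpose_nonsing_inv, ← Matrix.transpose_map,
    hsymm.eq]

lemma B_symm (hsymm : T.IsSymm) (x y : Fin n → ℂ) :
    dotProduct x ((Mmat T).mulVec y) = dotProduct y ((Mmat T).mulVec x) := by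
  rw [Matrix.dotProduct_mulVec]
  nth_rewrite 1 [← Mmat_symm T hsymm]
  rw [Matrix.vecMul_transpose, dotProduct_comm]

lemma conj_B (x y : Fin n → ℂ) :
    (starRingEnd ℂ) (dotProduct x ((Mmat T).mulVec y)) =
      dotProduct (star x) ((Mmat T).mulVec (star y)) := by
  simp [dotProduct, Matrix.mulVec, Mmat, Matrix.map_apply, map_sum, Finset.mul_sum,
    _root_.map_mul, Complex.conj_ofReal]

lemma star_uVec (h : (Fin n → ℝ) × (Fin n → ℝ)) : star (uVec T h) = uVecStar T h := by
  funext i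
  simp [uVec, uVecStar, Matrix.mulVec, dotProduct, cvec, Matrix.map_apply, map_sum,
    Complex.conj_ofReal]

lemma star_uVecStar (h : (Fin n → ℝ) × (Fin n → ℝ)) : star (uVecStar T h) = uVec T h := by
  rw [← star_uVec T h, star_star]

lemma conj_Hform (hsymm : T.IsSymm) (g h : (Fin n → ℝ) × (Fin n → ℝ)) :
    (starRingEnd ℂ) (Hform T g h) = Hform T h g := by
  show (starRingEnd ℂ) (dotProduct (uVec T g) ((Mmat T).mulVec (uVecStar T h))) = _
  rw [conj_B, star_uVec, star_uVecStar, B_symm T hsymm]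
  rfl

lemma uVec_add (g h : (Fin n → ℝ) × (Fin n → ℝ)) :
    uVec T (g + h) = uVec T g + uVec T h := by
  funext i
  simp [uVec, cvec, Matrix.mulVec_add, Matrix.mulVec, dotProduct, mul_add,
    Finset.sum_add_distrib]
  push_cast
  ring

lemma uVecStar_add (g h : (Fin n → ℝ) × (Fin n → ℝ)) :
    uVecStar T (g + h) = uVecStar T g + uVecStar T h := by
  funext i
  simp [uVecStar, cvec, Matrix.mulVec, dotProduct, mul_add, Finset.sum_add_distrib]
  push_cast
  ring

lemma cvec_add (x y : Fin n → ℝ) : cvec (x + y) = cvec x + cvec y := by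
  funext i; simp [cvec]

/-- Key algebraic identity:
`H_c(g+h) = H_c(g) + H_c(h) + 2 X(g,h) − 2i Im H(g,h)`. -/
lemma Hc_add (hsymm : T.IsSymm) (c : Fin n → ℂ) (g h : (Fin n → ℝ) × (Fin n → ℝ)) :
    HcForm T c (g + h) =
      HcForm T c g + HcForm T c h + 2 * Xform T c g h -
        2 * ((Hform T g h).im : ℂ) * Complex.I := by
  have hconj : 2 * ((Hform T g h).im : ℂ) * Complex.I = Hform T g h - Hform T h g := by
    have h1 := Complex.sub_conj (Hform T g h)
    rw [conj_Hform T hsymm] at h1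
    push_cast at h1 ⊢
    linear_combination -h1
  rw [hconj]
  simp only [HcForm, Xform, Hform, ← Mmat_def, uVec_add, uVecStar_add, Prod.fst_add, cvec_add]
  set m : Fin n → ℂ := fun i => ((c i).im : ℂ) with hm
  set w : Fin n → ℂ := fun i => 2 * Complex.I * ((c i).im : ℂ) with hwdef
  have hw : w = (2 * Complex.I) • m := by
    funext i; simp [hwdef, hm, smul_eq_mul]
  have hww : dotProduct w ((Mmat T).mulVec w) =
      -4 * dotProduct m ((Mmat T).mulVec m) := by
    rw [hw, Matrix.mulVec_smul, dotProduct_smul, smul_dotProduct, smul_smul, smul_eq_mul]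
    have : (2 * Complex.I) * (2 * Complex.I) = -4 := by
      have := Complex.I_mul_I
      ring_nf
      rw [Complex.I_sq]
      ring
    rw [this]
  simp only [add_sub_assoc, dotProduct_add, add_dotProduct, dotProduct_sub, sub_dotProduct,
    Matrix.mulVec_add, Matrix.mulVec_sub]
  linear_combination -hww

end aux



/-- the generalized quantum theta function
`Θ_{D,c} = Σ_{h∈D} exp(−(π/2)H_c(h̲,h̲)) e_D(h)` satisfies, for every `g ∈ D`,
`exp(−(π/2)H_c(g̲,g̲)) · e_D(g) · x_{g,c}*(Θ_{D,c}) = Θ_{D,c}`, where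
`x_{g,c}*(e_D(h)) = exp(−π X(g̲,h̲)) e_D(h)`. -/
theorem generalized_quantum_theta_functional_equation {n : ℕ}
    (T : Matrix (Fin n) (Fin n) ℂ)
    (hsymm : T.IsSymm) (hpos : (T.map Complex.im).PosDef) (c : Fin n → ℂ)
    (D : AddSubgroup ((Fin n → ℝ) × (Fin n → ℝ)))
    (A : Type*) [NormedRing A] [NormedAlgebra ℂ A] [CompleteSpace A]
    (e : D → A)
    (hmul : ∀ g h : D, e g * e h =
      Complex.exp ((π : ℂ) * Complex.I * (Hform T (g : _) (h : _)).im) • e (g + h))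
    (g : D)
    (hsum : Summable (fun h : D => Complex.exp (-((π : ℂ) / 2) * HcForm T c h) • e h))
    (hsum' : Summable (fun h : D =>
      (Complex.exp (-((π : ℂ) / 2) * HcForm T c h) *
        Complex.exp (-(π : ℂ) * Xform T c g h)) • e h)) :
    Complex.exp (-((π : ℂ) / 2) * HcForm T c g) •
      (e g * ∑' h : D,
        (Complex.exp (-((π : ℂ) / 2) * HcForm T c h) *
          Complex.exp (-(π : ℂ) * Xform T c g h)) • e h) =
    ∑' h : D, Complex.exp (-((π : ℂ) / 2) * HcForm T c h) • e h := by
  set F : D → A := fun h => Complex.exp (-((π : ℂ) / 2) * HcForm T c h) • e h with hF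
  let L : A →L[ℂ] A :=
    Complex.exp (-((π : ℂ) / 2) * HcForm T c g) • ContinuousLinearMap.mul ℂ A (e g)
  have hL : ∀ x : A, L x = Complex.exp (-((π : ℂ) / 2) * HcForm T c g) • (e g * x) :=
    fun x => rfl
  have key : ∀ h : D,
      Complex.exp (-((π : ℂ) / 2) * HcForm T c g) •
        ((Complex.exp (-((π : ℂ) / 2) * HcForm T c h) *
          Complex.exp (-(π : ℂ) * Xform T c g h)) • (e g * e h)) = F (g + h) := by
    intro h
    rw [hmul g h, smul_smul, smul_smul, hF]
    have hcoe : ((g + h : D) : (Fin n → ℝ) × (Fin n → ℝ)) = (g : _) + (h : _) := rfl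
    simp only [hcoe]
    congr 1
    rw [Hc_add T hsymm c (g : _) (h : _), ← Complex.exp_add, ← Complex.exp_add,
      ← Complex.exp_add]
    congr 1
    ring
  have h2 := L.map_tsum hsum'
  rw [← hL, h2]
  calc ∑' h : D, L ((Complex.exp (-((π : ℂ) / 2) * HcForm T c h) *
          Complex.exp (-(π : ℂ) * Xform T c g h)) • e h)
      = ∑' h : D, F (g + h) := by
        refine tsum_congr fun h => ?_
        rw [hL, mul_smul_comm]
        exact key h
    _ = ∑' h : D, F h := by
        have := (Equiv.addLeft g).tsum_eq F
        simpa [Equiv.coe_addLeft] using this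

end
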